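/- For any category C and objects X, Y in C, the set of functors over C from the slice category C/X to the slice category C/Y is in natural bijection with the set of morphisms Hom_C(X, Y); consequently the assignment X ↦ C/X defines a fully faithful embedding of C into the category of categories over C. -/

import Mathlib

/-!
`𝟙 X` is terminal in `C/X`, and every `Z : C/X` maps to it by `Z.hom`. A functor `H` over `C`
keeps underlying objects and morphisms, so it sends this map to a morphism with underlying map
`Z.hom`; its commuting triangle reads `(H Z).hom = Z.hom ≫ f` with `f := (H (𝟙 X)).hom`.
Hence `H = Over.map f`, and `f` is recovered from `Over.map f` by evaluating at `𝟙 X`.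
-/

open CategoryTheory

/-- The canonical map sending a morphism `f : X ⟶ Y` to the induced functor
`C/X ⥤ C/Y` between slice categories, which strictly commutes with the
projections to `C`. -/
noncomputable def sliceFunctorOfHom {C : Type u} [Category.{v} C] (X Y : C) (f : X ⟶ Y) :
    {H : Over X ⥤ Over Y // H ⋙ Over.forget Y = Over.forget X} :=
  ⟨Over.map f, rfl⟩

namespace CategoryTheory.Over

variable {C : Type u} [Category.{v} C] {X Y : C} {H : Over X ⥤ Over Y}

lemma left_obj_of_comp_forget_eq (hH : H ⋙ forget Y = forget X) (Z : Over X) :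
    (H.obj Z).left = Z.left :=
  Functor.congr_obj hH Z

lemma left_map_of_comp_forget_eq (hH : H ⋙ forget Y = forget X) {Z W : Over X} (φ : Z ⟶ W) :
    (H.map φ).left = eqToHom (left_obj_of_comp_forget_eq hH Z) ≫ φ.left ≫
      eqToHom (left_obj_of_comp_forget_eq hH W).symm := by
  simpa using Functor.congr_hom hH φ

noncomputable def homOfCompForgetEq (H : Over X ⥤ Over Y) (hH : H ⋙ forget Y = forget X) :
    X ⟶ Y :=
  eqToHom (left_obj_of_comp_forget_eq hH (mk (𝟙 X))).symm ≫ (H.obj (mk (𝟙 X))).hom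

lemma hom_obj_of_comp_forget_eq (hH : H ⋙ forget Y = forget X) (Z : Over X) :
    (H.obj Z).hom =
      eqToHom (left_obj_of_comp_forget_eq hH Z) ≫ Z.hom ≫ homOfCompForgetEq H hH := by
  have triangle := w (H.map (homMk Z.hom : Z ⟶ mk (𝟙 X)))
  rw [left_map_of_comp_forget_eq hH] at triangle
  simp [homOfCompForgetEq, ← triangle]

lemma eq_map_homOfCompForgetEq (hH : H ⋙ forget Y = forget X) :
    H = map (homOfCompForgetEq H hH) := by
  refine Functor.ext (fun Z => CostructuredArrow.obj_ext _ _
    (left_obj_of_comp_forget_eq hH Z) ?_) (fun Z W φ => CostructuredArrow.ext _ _ ?_)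
  · simp [hom_obj_of_comp_forget_eq hH Z]
  · simp [left_map_of_comp_forget_eq hH φ]

lemma homOfCompForgetEq_map (f : X ⟶ Y) : homOfCompForgetEq (map f) rfl = f := by
  simp [homOfCompForgetEq]

end CategoryTheory.Over

noncomputable def sliceFunctorEquivHom {C : Type u} [Category.{v} C] (X Y : C) :
    {H : Over X ⥤ Over Y // H ⋙ Over.forget Y = Over.forget X} ≃ (X ⟶ Y) where
  toFun H := Over.homOfCompForgetEq H.1 H.2
  invFun := sliceFunctorOfHom X Y
  left_inv H := Subtype.ext (Over.eq_map_homOfCompForgetEq H.2).symm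
  right_inv := Over.homOfCompForgetEq_map

/-- Functors over `C` from `C/X` to `C/Y` are in bijection with `Hom_C(X, Y)`;
hence `X ↦ C/X` is a fully faithful embedding of `C` into categories over `C`. -/
theorem slice_functors_over_C_equiv_hom {C : Type u} [Category.{v} C] (X Y : C) :
    Function.Bijective (sliceFunctorOfHom X Y) :=
  (sliceFunctorEquivHom X Y).symm.bijective
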